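/- Let b ∈ ℂ⁴ with |b| < 1, δ = 1 − b·b ≠ 0, θ = i√3, and ω = e^{2πi/3}. Define A as the 5×5 matrix with first row (1, b₁, b₂, b₃, b₄), first column (1, b₁, b₂, b₃, b₄)ᵀ, and identity in the lower-right 4×4 block, and B as the matrix with first row (ω, ω̄b₁, ω̄b₂, ω̄b₃, ω̄b₄), first column (ω, ω̄b₁, ω̄b₂, ω̄b₃, ω̄b₄)ᵀ, and ωI in the lower-right 4×4 block. Then Z = A⁻¹B satisfies Z = ωI + (θ/δ)·N, where N₀₀ = b·b, N₀ⱼ = Nⱼ₀ = −bⱼ, and Nᵢⱼ = bᵢbⱼ for i,j ∈ {1,…,4}. -/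

import Mathlib

open Complex Finset Matrix

/-! Since `ω - ω̄ = θ`, the matrix `B` is `ω̄ A + θ I`, so `A⁻¹ B = ω̄ I + θ A⁻¹`. The inverse
of `A` is explicit: `A (δ I + N) = δ I`, i.e. `A⁻¹ = I + N / δ`, and `ω̄ + θ = ω`. -/

namespace Matrix

variable {n R : Type*} [DecidableEq n] [CommRing R]

/-- `A = arrow 1 1 b` and `B = arrow ω ω̄ b`. -/
def arrow (d c : R) (b : n → R) : Matrix (Option n) (Option n) R :=
  of fun i j => match i, j with
    | none, none => d
    | none, some j => c * b j
    | some i, none => c * b i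
    | some i, some j => if i = j then d else 0

theorem arrow_eq_smul_add (d c : R) (b : n → R) :
    arrow d c b = c • arrow 1 1 b + (d - c) • 1 := by
  ext (_ | i) (_ | j) <;> simp [arrow, one_apply]
  split_ifs <;> ring

variable [Fintype n]

/-- `(1 - b·b) • 1 + arrowCorrection b` is the adjugate of `arrow 1 1 b`, whose determinant is
`1 - b·b`. -/
def arrowCorrection (b : n → R) : Matrix (Option n) (Option n) R :=
  of fun i j => match i, j with
    | none, none => ∑ k, b k ^ 2
    | none, some j => -b j
    | some i, none => -b i
    | some i, some j => b i * b j

theorem arrow_one_mul_arrowCorrection (b : n → R) :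
    arrow 1 1 b * ((1 - ∑ k, b k ^ 2) • 1 + arrowCorrection b) = (1 - ∑ k, b k ^ 2) • 1 := by
  ext (_ | i) (_ | j) <;>
    simp [arrow, arrowCorrection, mul_apply, Fintype.sum_option, one_apply, mul_add,
      Finset.sum_add_distrib, sq, ← mul_assoc, ← Finset.sum_mul] <;>
    ring

section Field

variable {K : Type*} [Field K] {b : n → K}

theorem arrow_one_mul_one_add_arrowCorrection (hδ : 1 - ∑ k, b k ^ 2 ≠ 0) :
    arrow 1 1 b * (1 + (1 - ∑ k, b k ^ 2)⁻¹ • arrowCorrection b) = 1 := by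
  calc arrow 1 1 b * (1 + (1 - ∑ k, b k ^ 2)⁻¹ • arrowCorrection b)
      = (1 - ∑ k, b k ^ 2)⁻¹ • (arrow 1 1 b * ((1 - ∑ k, b k ^ 2) • 1 + arrowCorrection b)) := by
        rw [← mul_smul_comm, smul_add, smul_smul, inv_mul_cancel₀ hδ, one_smul]
    _ = 1 := by rw [arrow_one_mul_arrowCorrection, smul_smul, inv_mul_cancel₀ hδ, one_smul]

theorem inv_arrow_one_mul_arrow (hδ : 1 - ∑ k, b k ^ 2 ≠ 0) (d c : K) :
    (arrow 1 1 b)⁻¹ * arrow d c b = d • 1 + ((d - c) / (1 - ∑ k, b k ^ 2)) • arrowCorrection b := by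
  have hright := arrow_one_mul_one_add_arrowCorrection hδ
  rw [arrow_eq_smul_add d c b, Matrix.mul_add, mul_smul_comm, mul_smul_comm,
    nonsing_inv_mul _ (isUnit_det_of_right_inverse hright), inv_eq_right_inv hright, mul_one]
  module

end Field

end Matrix

theorem exp_two_pi_I_div_three_sub_conj :
    cexp (2 * Real.pi * I / 3) - starRingEnd ℂ (cexp (2 * Real.pi * I / 3)) = I * Real.sqrt 3 := by
  rw [sub_conj, show 2 * Real.pi * I / 3 = ((2 * Real.pi / 3 : ℝ) : ℂ) * I by push_cast; ring,
    exp_ofReal_mul_I_im, show 2 * Real.pi / 3 = Real.pi - Real.pi / 3 by ring, Real.sin_pi_sub,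
    Real.sin_pi_div_three]
  push_cast
  ring

theorem Z_formula (b : Fin 4 → ℂ)
    (δ θ ω : ℂ)
    (hδ : δ = 1 - ∑ i, (b i) ^ 2) (hδ0 : δ ≠ 0)
    (hθ : θ = Complex.I * Real.sqrt 3)
    (hω : ω = Complex.exp (2 * Real.pi * Complex.I / 3))
    (A B N : Matrix (Option (Fin 4)) (Option (Fin 4)) ℂ)
    (hA : ∀ i j, A i j = match i, j with
      | none, none => 1
      | none, some j => b j
      | some i, none => b i
      | some i, some j => if i = j then 1 else 0)
    (hB : ∀ i j, B i j = match i, j with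
      | none, none => ω
      | none, some j => starRingEnd ℂ ω * b j
      | some i, none => starRingEnd ℂ ω * b i
      | some i, some j => if i = j then ω else 0)
    (hN : ∀ i j, N i j = match i, j with
      | none, none => ∑ k, (b k) ^ 2
      | none, some j => -b j
      | some i, none => -b i
      | some i, some j => b i * b j) :
    A⁻¹ * B = ω • (1 : Matrix (Option (Fin 4)) (Option (Fin 4)) ℂ) + (θ / δ) • N := by
  have hA' : A = arrow 1 1 b := by ext (_ | i) (_ | j) <;> simp [hA, arrow]
  have hB' : B = arrow ω (starRingEnd ℂ ω) b := by ext (_ | i) (_ | j) <;> simp [hB, arrow]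
  have hN' : N = arrowCorrection b := by ext (_ | i) (_ | j) <;> simp [hN, arrowCorrection]
  have hθ' : θ = ω - starRingEnd ℂ ω := by rw [hθ, hω, exp_two_pi_I_div_three_sub_conj]
  subst hδ
  rw [hA', hB', hN', hθ', inv_arrow_one_mul_arrow hδ0]
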